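/- Let p = (p_1, …, p_n) be a probability distribution with maximum component p_M > 0. Then for every α > 1, ∑_{i=1}^n p_i^α ((p_i + 1/n)/2)^{1−α} ≤ ((p_M + 1/n)/(2 p_M))^{1−α}. -/

import Mathlib

open Real Filter Topology

/-- Normalized Rényi entropy of a distribution `p` on `Fin n`. -/
noncomputable def renyiH (n : ℕ) (p : Fin n → ℝ) (α : ℝ) : ℝ :=
  (1 / ((1 - α) * Real.log n)) * Real.log (∑ i, p i ^ α)

/-- Jensen–Rényi divergence of `p` from the uniform distribution on `Fin n`. -/
noncomputable def renyiD (n : ℕ) (p : Fin n → ℝ) (α : ℝ) : ℝ :=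
  (1 / (2 * (α - 1))) *
    (Real.log (∑ i, p i ^ α * ((p i + 1 / (n : ℝ)) / 2) ^ (1 - α)) +
     Real.log (∑ i, (n : ℝ) ^ (-α) * ((p i + 1 / (n : ℝ)) / 2) ^ (1 - α)))

/-- Normalization constant `D_α^*`. -/
noncomputable def renyiDstar (n : ℕ) (α : ℝ) : ℝ :=
  (1 / (2 * (α - 1))) *
    Real.log (((((n : ℝ) + 1) ^ (1 - α) + (n : ℝ) - 1) / (n : ℝ)) *
      (((n : ℝ) + 1) / (4 * (n : ℝ))) ^ (1 - α))

/-- Rényi statistical complexity. -/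
noncomputable def renyiC (n : ℕ) (p : Fin n → ℝ) (α : ℝ) : ℝ :=
  renyiD n p α * renyiH n p α / renyiDstar n α

/-! For `p_i > 0` the `i`-th summand equals `p_i · ((p_i + 1/n)/(2 p_i))^(1-α)`. The base
`(x + 1/n)/(2x)` decreases in `x`, so it is smallest at `x = p_M`, and since `1 - α < 0` the
power is largest there. Bounding every summand by `p_i · ((p_M + 1/n)/(2 p_M))^(1-α)` and using
`∑ p_i = 1` gives the claim. -/

theorem Real.rpow_mul_rpow_one_sub {x y : ℝ} (hx : 0 < x) (hy : 0 ≤ y) (α : ℝ) :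
    x ^ α * y ^ (1 - α) = x * (y / x) ^ (1 - α) := by
  rw [div_rpow hy hx.le, rpow_sub hx, rpow_one]
  field_simp

theorem add_div_two_mul_le_of_le {x m c : ℝ} (hx : 0 < x) (hxm : x ≤ m) (hc : 0 ≤ c) :
    (m + c) / (2 * m) ≤ (x + c) / (2 * x) := by
  rw [div_le_div_iff₀ (by linarith) (by positivity)]
  nlinarith

theorem rpow_mul_add_div_two_rpow_one_sub_le {x m c α : ℝ} (hx : 0 ≤ x) (hxm : x ≤ m)
    (hm : 0 < m) (hc : 0 ≤ c) (hα : 1 ≤ α) :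
    x ^ α * ((x + c) / 2) ^ (1 - α) ≤ x * ((m + c) / (2 * m)) ^ (1 - α) := by
  rcases hx.eq_or_lt with rfl | hx_pos
  · simp [zero_rpow (by linarith : α ≠ 0)]
  rw [rpow_mul_rpow_one_sub hx_pos (by positivity), div_div]
  refine mul_le_mul_of_nonneg_left ?_ hx
  exact rpow_le_rpow_of_nonpos (by positivity) (add_div_two_mul_le_of_le hx_pos hxm hc)
    (by linarith)

theorem renyi_sum_upper_bound_max_general (n : ℕ) (p : Fin n → ℝ)
    (hp : ∀ i, 0 ≤ p i) (hsum : ∑ i, p i = 1)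
    (pM : ℝ) (hpM_ub : ∀ i, p i ≤ pM) (hpM_pos : 0 < pM) :
    ∀ α : ℝ, 1 < α →
      (∑ i, p i ^ α * ((p i + 1 / (n : ℝ)) / 2) ^ (1 - α)) ≤
        ((pM + 1 / (n : ℝ)) / (2 * pM)) ^ (1 - α) := by
  intro α hα
  calc (∑ i, p i ^ α * ((p i + 1 / (n : ℝ)) / 2) ^ (1 - α))
      ≤ ∑ i, p i * ((pM + 1 / (n : ℝ)) / (2 * pM)) ^ (1 - α) :=
        Finset.sum_le_sum fun i _ ↦
          rpow_mul_add_div_two_rpow_one_sub_le (hp i) (hpM_ub i) hpM_pos (by positivity) hα.le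
    _ = ((pM + 1 / (n : ℝ)) / (2 * pM)) ^ (1 - α) := by rw [← Finset.sum_mul, hsum, one_mul]

/-- For `α > 1`, `∑ i, p_i^α ((p_i + 1/n)/2)^(1-α) ≤ ((pM + 1/n)/(2 pM))^(1-α)`. -/
theorem renyi_sum_upper_bound_max (n : ℕ) (hn : 2 ≤ n) (p : Fin n → ℝ)
    (hp : ∀ i, 0 ≤ p i) (hsum : ∑ i, p i = 1)
    (pM : ℝ) (hpM_mem : ∃ i, p i = pM) (hpM_ub : ∀ i, p i ≤ pM) (hpM_pos : 0 < pM) :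
    ∀ α : ℝ, 1 < α →
      (∑ i, p i ^ α * ((p i + 1 / (n : ℝ)) / 2) ^ (1 - α)) ≤
        ((pM + 1 / (n : ℝ)) / (2 * pM)) ^ (1 - α) :=
  renyi_sum_upper_bound_max_general n p hp hsum pM hpM_ub hpM_pos
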